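/- arXiv:2510.00310 — 3 statements merged into one kernel-verified Lean document; each statement's English description precedes it below -/
import Mathlib

section
/- Let v_1, ..., v_n ∈ R^d with mean v̄_n, and S ⊆ [n] with |S| = n−f where 0 < f < n. Then ‖v̄_S − v̄_n‖² ≤ (f/(n(n−f))) ∑_{i=1}^n ‖v_i − v̄_n‖², where v̄_S is the mean of the v_i over S. -/
lemma norm_sum_sq_le_card_mul {E : Type*} [NormedAddCommGroup E] {ι : Type*}
    (t : Finset ι) (w : ι → E) :
    ‖∑ i ∈ t, w i‖ ^ 2 ≤ (t.card : ℝ) * ∑ i ∈ t, ‖w i‖ ^ 2 := by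
  calc ‖∑ i ∈ t, w i‖ ^ 2 ≤ (∑ i ∈ t, ‖w i‖) ^ 2 :=
        pow_le_pow_left₀ (norm_nonneg _) (norm_sum_le _ _) 2
    _ ≤ (t.card : ℝ) * ∑ i ∈ t, ‖w i‖ ^ 2 := sq_sum_le_card_mul_sum_sq

set_option maxHeartbeats 800000 in
/-- Deviation of a subset mean from the global mean is bounded by the total variance
scaled by `f / (n (n - f))`. -/
theorem subset_mean_deviation {d n f : ℕ} (hf : 0 < f) (hfn : f < n)
    (v : Fin n → EuclideanSpace ℝ (Fin d)) (S : Finset (Fin n)) (hS : S.card = n - f) :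
    ‖((n - f : ℕ) : ℝ)⁻¹ • ∑ i ∈ S, v i - (n : ℝ)⁻¹ • ∑ i, v i‖ ^ 2
      ≤ ((f : ℝ) / ((n : ℝ) * ((n - f : ℕ) : ℝ))) * ∑ i, ‖v i - (n : ℝ)⁻¹ • ∑ j, v j‖ ^ 2 := by
  set m := n - f with hm
  have hmpos : 0 < m := Nat.sub_pos_of_lt hfn
  have hnpos : 0 < n := hf.trans hfn
  have hmf : m + f = n := Nat.sub_add_cancel hfn.le
  have hnm : (n : ℝ) = (m : ℝ) + f := by exact_mod_cast hmf.symm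
  set vbar := (n : ℝ)⁻¹ • ∑ j, v j with hvbar
  set w : Fin n → EuclideanSpace ℝ (Fin d) := fun i => v i - vbar with hw
  have hsum0 : ∑ i, w i = 0 := by
    simp only [hw, Finset.sum_sub_distrib, Finset.sum_const, Finset.card_univ,
      Fintype.card_fin, hvbar, ← Nat.cast_smul_eq_nsmul ℝ]
    rw [smul_smul, mul_inv_cancel₀ (by positivity : (n:ℝ) ≠ 0), one_smul, sub_self]
  have hL : ((m : ℕ) : ℝ)⁻¹ • ∑ i ∈ S, v i - vbar = (m : ℝ)⁻¹ • ∑ i ∈ S, w i := by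
    simp only [hw, Finset.sum_sub_distrib, smul_sub, Finset.sum_const, hS, ← hm,
      ← Nat.cast_smul_eq_nsmul ℝ]
    rw [smul_smul, inv_mul_cancel₀ (by positivity : (m:ℝ) ≠ 0), one_smul]
  have hcompl : ∑ i ∈ Sᶜ, w i = - ∑ i ∈ S, w i := by
    have h := Finset.sum_add_sum_compl S w
    rw [hsum0] at h
    exact eq_neg_of_add_eq_zero_right h
  have hcardc : (Sᶜ : Finset (Fin n)).card = f := by
    rw [Finset.card_compl, hS, Fintype.card_fin]
    omega
  set A := ‖∑ i ∈ S, w i‖ ^ 2 with hA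
  have hA1 : A ≤ (m : ℝ) * ∑ i ∈ S, ‖w i‖ ^ 2 := by
    simpa [hS] using norm_sum_sq_le_card_mul S w
  have hA2 : A ≤ (f : ℝ) * ∑ i ∈ Sᶜ, ‖w i‖ ^ 2 := by
    have := norm_sum_sq_le_card_mul Sᶜ w
    rw [hcompl, norm_neg] at this
    simpa [hcardc] using this
  have hV : ∑ i, ‖w i‖ ^ 2 = ∑ i ∈ S, ‖w i‖ ^ 2 + ∑ i ∈ Sᶜ, ‖w i‖ ^ 2 :=
    (Finset.sum_add_sum_compl S _).symm
  rw [hL, norm_smul, mul_pow, ← hA]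
  have hVeq : ∑ i, ‖v i - (n : ℝ)⁻¹ • ∑ j, v j‖ ^ 2 = ∑ i, ‖w i‖ ^ 2 := rfl
  rw [hVeq]
  have hm0 : (0:ℝ) < m := by exact_mod_cast hmpos
  have hf0 : (0:ℝ) < f := by exact_mod_cast hf
  have hn0 : (0:ℝ) < n := by exact_mod_cast hnpos
  have key : A * (n : ℝ) ≤ (f : ℝ) * m * ∑ i, ‖w i‖ ^ 2 := by
    have h1 : A * (f:ℝ) ≤ (f:ℝ) * m * ∑ i ∈ S, ‖w i‖ ^ 2 := by nlinarith
    have h2 : A * (m:ℝ) ≤ (f:ℝ) * m * ∑ i ∈ Sᶜ, ‖w i‖ ^ 2 := by nlinarith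
    rw [hV, hnm]; nlinarith
  have hnorm : ‖(m : ℝ)⁻¹‖ ^ 2 = ((m:ℝ)⁻¹) ^ 2 := by
    rw [Real.norm_eq_abs, sq_abs]
  rw [hnorm, inv_pow, ← one_div, div_mul_eq_mul_div, one_mul, div_mul_eq_mul_div,
    div_le_div_iff₀ (by positivity) (by positivity)]
  nlinarith [mul_le_mul_of_nonneg_right key hm0.le]
end

section
/- Let z_1, ..., z_n be scalars with mean z̄, and S ⊆ [n] of size n−f with complement T of size f, where 0 < f < n. Then by Jensen's inequality, ∑_{i∈T}(z_i − z̄)² ≥ ((n−f)²/f) · (z̄_S − z̄)², where z̄_S is the mean over S. -/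
/-! Deviations from the global mean sum to zero, so those over `T` add up to
`(n - f) (z̄ - z̄_S)`; the bound is then Cauchy–Schwarz (Jensen for `x ↦ x²`) over the `f`
indices of `T`. -/

open Finset

theorem sq_sum_div_card_le_sum_sq {ι α : Type*} [Field α] [LinearOrder α]
    [IsStrictOrderedRing α] (s : Finset ι) (w : ι → α) :
    (∑ i ∈ s, w i) ^ 2 / #s ≤ ∑ i ∈ s, w i ^ 2 :=
  div_le_of_le_mul₀ (by positivity) (sum_nonneg fun i _ ↦ sq_nonneg (w i))
    (sq_sum_le_card_mul_sum_sq.trans_eq (mul_comm _ _))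

theorem sum_compl_sub_mean {ι : Type*} [Fintype ι] [DecidableEq ι] {s : Finset ι}
    (hs : s.Nonempty) (z : ι → ℝ) :
    ∑ i ∈ sᶜ, (z i - (Fintype.card ι : ℝ)⁻¹ * ∑ j, z j)
      = #s * ((Fintype.card ι : ℝ)⁻¹ * ∑ j, z j - (#s : ℝ)⁻¹ * ∑ i ∈ s, z i) := by
  have hcard : (#s : ℝ) ≠ 0 := by exact_mod_cast hs.card_pos.ne'
  have huniv : (Fintype.card ι : ℝ) ≠ 0 := by
    exact_mod_cast (hs.card_pos.trans_le (card_le_univ s)).ne'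
  rw [sum_sub_distrib, sum_const, card_compl, nsmul_eq_mul, Nat.cast_sub (card_le_univ s),
    ← sum_compl_add_sum s z]
  field_simp
  ring

theorem complement_jensen_bound_general {n f : ℕ} (hfn : f < n)
    (z : Fin n → ℝ) (S : Finset (Fin n)) (hS : S.card = n - f) :
    ∑ i ∈ Sᶜ, (z i - (n : ℝ)⁻¹ * ∑ j, z j) ^ 2
      ≥ (((n - f : ℕ) : ℝ) ^ 2 / (f : ℝ)) *
          (((n - f : ℕ) : ℝ)⁻¹ * ∑ i ∈ S, z i - (n : ℝ)⁻¹ * ∑ j, z j) ^ 2 := by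
  have hT : #Sᶜ = f := by rw [card_compl, Fintype.card_fin, hS, Nat.sub_sub_self hfn.le]
  have hS_nonempty : S.Nonempty := card_pos.mp (hS ▸ Nat.sub_pos_of_lt hfn)
  have hdev := sum_compl_sub_mean hS_nonempty z
  rw [Fintype.card_fin, hS] at hdev
  calc (((n - f : ℕ) : ℝ) ^ 2 / (f : ℝ)) *
          (((n - f : ℕ) : ℝ)⁻¹ * ∑ i ∈ S, z i - (n : ℝ)⁻¹ * ∑ j, z j) ^ 2
      = (∑ i ∈ Sᶜ, (z i - (n : ℝ)⁻¹ * ∑ j, z j)) ^ 2 / #Sᶜ := by rw [hdev, hT]; ring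
    _ ≤ ∑ i ∈ Sᶜ, (z i - (n : ℝ)⁻¹ * ∑ j, z j) ^ 2 := sq_sum_div_card_le_sum_sq _ _

/-- Jensen-type bound: the sum of squared deviations of the complement `T = Sᶜ` from the
global mean dominates `((n-f)²/f)` times the squared deviation of the subset mean. -/
theorem complement_jensen_bound {n f : ℕ} (hf : 0 < f) (hfn : f < n)
    (z : Fin n → ℝ) (S : Finset (Fin n)) (hS : S.card = n - f) :
    ∑ i ∈ Sᶜ, (z i - (n : ℝ)⁻¹ * ∑ j, z j) ^ 2
      ≥ (((n - f : ℕ) : ℝ) ^ 2 / (f : ℝ)) *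
          (((n - f : ℕ) : ℝ)⁻¹ * ∑ i ∈ S, z i - (n : ℝ)⁻¹ * ∑ j, z j) ^ 2 :=
  complement_jensen_bound_general hfn z S hS
end

section
/- Per-coordinate subset-mean deviation bound: let h_1,...,h_n ∈ R^K with mean h̄, H ⊆ [n] with |H| = n−f, and h̄_H the mean over H. Then for every coordinate k, ([h̄_H]_k − [h̄]_k)² ≤ (f/(n−f)) · (1/n)∑_{i=1}^n ([h_i]_k − [h̄]_k)², using that ∑_{i=1}^n ([h_i]_k − [h̄]_k)² ≥ (n(n−f)/f)([h̄_H]_k − [h̄]_k)². -/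
/-!
Centre the data: with `x i = h i k - h̄_k` the deviations sum to zero, so the sum `S` of the
deviations over `H` is minus their sum over the complement. Cauchy–Schwarz on `H` and on its
complement bounds `S²` by `(n - f) ∑_H x²` and by `f ∑_{Hᶜ} x²`; weighting these by `f` and
`n - f` and adding gives `n S² ≤ f (n - f) ∑ x²`, which is the claim after dividing by
`n (n - f)²`.
-/

open Finset

theorem card_mul_sq_sum_le_of_sum_eq_zero {ι α : Type*} [Fintype ι] [DecidableEq ι]
    [CommRing α] [LinearOrder α] [IsStrictOrderedRing α]
    {x : ι → α} (hx : ∑ i, x i = 0) (s : Finset ι) :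
    Fintype.card ι * (∑ i ∈ s, x i) ^ 2 ≤ #s * #sᶜ * ∑ i, x i ^ 2 := by
  have hcompl : ∑ i ∈ sᶜ, x i = -∑ i ∈ s, x i := by
    rw [eq_neg_iff_add_eq_zero, add_comm, sum_add_sum_compl, hx]
  have hs := sq_sum_le_card_mul_sum_sq (s := s) (f := x)
  have hsc := sq_sum_le_card_mul_sum_sq (s := sᶜ) (f := x)
  rw [hcompl, neg_sq] at hsc
  calc (Fintype.card ι : α) * (∑ i ∈ s, x i) ^ 2
      = #sᶜ * (∑ i ∈ s, x i) ^ 2 + #s * (∑ i ∈ s, x i) ^ 2 := by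
        rw [← card_add_card_compl s]; push_cast; ring
    _ ≤ #sᶜ * (#s * ∑ i ∈ s, x i ^ 2) + #s * (#sᶜ * ∑ i ∈ sᶜ, x i ^ 2) := by
        gcongr
    _ = #s * #sᶜ * ∑ i, x i ^ 2 := by
        rw [← sum_add_sum_compl s (fun i => x i ^ 2)]; ring

theorem sum_sub_mean_eq_zero {ι α : Type*} [Fintype ι] [Field α] [CharZero α] (y : ι → α) :
    ∑ i, (y i - (Fintype.card ι : α)⁻¹ * ∑ j, y j) = 0 := by
  cases isEmpty_or_nonempty ι with
  | inl _ => simp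
  | inr _ =>
    have hcard : (Fintype.card ι : α) ≠ 0 := by exact_mod_cast Fintype.card_ne_zero
    rw [sum_sub_distrib, sum_const, card_univ, nsmul_eq_mul, mul_inv_cancel_left₀ hcard,
      sub_self]

theorem inv_card_mul_sum_sub {ι α : Type*} [Field α] {y : ι → α} {s : Finset ι}
    (hs : (#s : α) ≠ 0) (c : α) :
    (#s : α)⁻¹ * ∑ i ∈ s, y i - c = (#s : α)⁻¹ * ∑ i ∈ s, (y i - c) := by
  rw [sum_sub_distrib, sum_const, nsmul_eq_mul, mul_sub, inv_mul_cancel_left₀ hs]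

theorem percoord_subset_mean_bound_general {n K f : ℕ} (hfn : f < n)
    (h : Fin n → Fin K → ℝ) (H : Finset (Fin n)) (hH : H.card = n - f) :
    ∀ k, (((n - f : ℕ) : ℝ)⁻¹ * ∑ i ∈ H, h i k - (n : ℝ)⁻¹ * ∑ i, h i k) ^ 2
      ≤ ((f : ℝ) / ((n - f : ℕ) : ℝ)) *
          ((n : ℝ)⁻¹ * ∑ i, (h i k - (n : ℝ)⁻¹ * ∑ j, h j k) ^ 2) := by
  intro k
  have hn : (0 : ℝ) < n := by exact_mod_cast (Nat.zero_le f).trans_lt hfn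
  have hm : (0 : ℝ) < ((n - f : ℕ) : ℝ) := by exact_mod_cast Nat.sub_pos_of_lt hfn
  have hcompl : #Hᶜ = f := by rw [card_compl, Fintype.card_fin, hH, Nat.sub_sub_self hfn.le]
  have key := card_mul_sq_sum_le_of_sum_eq_zero
    (x := fun i => h i k - (n : ℝ)⁻¹ * ∑ j, h j k)
    (by simpa only [Fintype.card_fin] using sum_sub_mean_eq_zero (fun i => h i k)) H
  rw [Fintype.card_fin, hH, hcompl] at key
  rw [← hH, inv_card_mul_sum_sub (by rw [hH]; exact hm.ne'), hH]
  set S := ∑ i ∈ H, (h i k - (n : ℝ)⁻¹ * ∑ j, h j k)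
  set Q := ∑ i, (h i k - (n : ℝ)⁻¹ * ∑ j, h j k) ^ 2
  calc (((n - f : ℕ) : ℝ)⁻¹ * S) ^ 2 = n * S ^ 2 / (n * ((n - f : ℕ) : ℝ) ^ 2) := by
        field_simp
    _ ≤ ((n - f : ℕ) : ℝ) * f * Q / (n * ((n - f : ℕ) : ℝ) ^ 2) := by gcongr
    _ = f / ((n - f : ℕ) : ℝ) * ((n : ℝ)⁻¹ * Q) := by field_simp

/-- Per-coordinate subset-mean deviation bound: for a subset `H` of size `n - f`, the
squared deviation of the subset mean from the global mean in each coordinate is at most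
`(f/(n-f))` times the per-coordinate empirical variance. -/
theorem percoord_subset_mean_bound {n K f : ℕ} (hf : 0 < f) (hfn : f < n)
    (h : Fin n → Fin K → ℝ) (H : Finset (Fin n)) (hH : H.card = n - f) :
    ∀ k, (((n - f : ℕ) : ℝ)⁻¹ * ∑ i ∈ H, h i k - (n : ℝ)⁻¹ * ∑ i, h i k) ^ 2
      ≤ ((f : ℝ) / ((n - f : ℕ) : ℝ)) *
          ((n : ℝ)⁻¹ * ∑ i, (h i k - (n : ℝ)⁻¹ * ∑ j, h j k) ^ 2) :=
  percoord_subset_mean_bound_general hfn h H hH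
end
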